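/- arXiv:1810.06093 — 8 statements merged into one kernel-verified Lean document; each statement's English description precedes it below -/
import Mathlib

section
/- Let A, B be sets with B infinite, let E ⊆ A × B be a relation with (∀a∈A)(∃b∈B)(a E b), and let κ be an uncountable cardinal. Suppose that κ equals both |B| and the evaluation of ⟨A,B,E⟩ (i.e. the associated cardinal characteristic is as large as possible). Then for every family ℱ of finitary operations on B with |ℱ| < κ, there exists a ⟨⟨A,B,E⟩, ℱ, κ⟩-pathway. -/
open Cardinal Set

/-- A subset `S` is closed under a finitary operation `F` (presented as a pair of an
arity `n` and a function `(Fin n → B) → B`). -/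
def ClosedUnderOp {B : Type*} (S : Set B) (F : Σ n : ℕ, (Fin n → B) → B) : Prop :=
  ∀ v : Fin F.1 → B, (∀ i, v i ∈ S) → F.2 v ∈ S

/-- `IsPathway E 𝓕 δ seq` says that `⟨seq α : α < δ⟩` is a
`⟨⟨A,B,E⟩, 𝓕, δ⟩`-pathway: an increasing continuous sequence of subsets of `B`
whose union is all of `B`, such that no `seq α` is `E`-dominating, and with each
`seq α` closed under every operation in `𝓕`. -/
structure IsPathway {A B : Type*} (E : A → B → Prop)
    (𝓕 : Set (Σ n : ℕ, (Fin n → B) → B)) (δ : Ordinal)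
    (seq : Ordinal → Set B) : Prop where
  mono : ∀ α β : Ordinal, α ≤ β → β < δ → seq α ⊆ seq β
  cont : ∀ γ : Ordinal, γ < δ → Order.IsSuccLimit γ → seq γ = ⋃ α : Ordinal, ⋃ _ : α < γ, seq α
  total : (⋃ α : Ordinal, ⋃ _ : α < δ, seq α) = Set.univ
  avoid : ∀ α : Ordinal, α < δ → ∃ x : A, ∀ y ∈ seq α, ¬ E x y
  closedF : ∀ α : Ordinal, α < δ → ∀ F ∈ 𝓕, ClosedUnderOp (seq α) F

/-- The evaluation of the triple `⟨A, B, E⟩`: the least cardinality of an `E`-dominating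
family `X ⊆ B`, i.e. of an `X` such that every `a ∈ A` is `E`-related to some `b ∈ X`. -/
noncomputable def evalTriple {A B : Type u} (E : A → B → Prop) : Cardinal.{u} :=
  sInf {c | ∃ X : Set B, #X = c ∧ ∀ a : A, ∃ b ∈ X, E a b}

/-!
Enumerate `B` in order type `κ` and let `B_α` be the closure under `𝓕` of the first `α`
elements. As `κ` is uncountable and `|𝓕| < κ`, closing a set of size `< κ` under `𝓕` keeps
its size `< κ`, so no `B_α` is dominating: the evaluation of `⟨A,B,E⟩` is `κ`. Continuity at
limits holds because closure under finitary operations commutes with directed unions.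
-/

open FirstOrder Language

universe v w

section

variable {B : Type w}

/-- `𝓕` as a first-order signature, so that closures under `𝓕` are Mathlib's substructures. -/
def opsLanguage (𝓕 : Set (Σ n : ℕ, (Fin n → B) → B)) : FirstOrder.Language.{w, 0} where
  Functions n := {g : (Fin n → B) → B // ⟨n, g⟩ ∈ 𝓕}
  Relations _ := Empty

instance (𝓕 : Set (Σ n : ℕ, (Fin n → B) → B)) : (opsLanguage 𝓕).Structure B where
  funMap g := g.1
  RelMap r := Empty.elim r

theorem card_sigma_functions_opsLanguage (𝓕 : Set (Σ n : ℕ, (Fin n → B) → B)) :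
    #(Σ n, (opsLanguage 𝓕).Functions n) = #𝓕 :=
  mk_congr
    { toFun := fun g => ⟨⟨g.1, g.2.1⟩, g.2.2⟩
      invFun := fun F => ⟨F.1.1, F.1.2, F.2⟩
      left_inv := fun _ => rfl
      right_inv := fun _ => rfl }

theorem closedUnderOp_substructure {𝓕 : Set (Σ n : ℕ, (Fin n → B) → B)}
    (S : (opsLanguage 𝓕).Substructure B) {F : Σ n : ℕ, (Fin n → B) → B} (hF : F ∈ 𝓕) :
    ClosedUnderOp (S : Set B) F :=
  fun v hv => S.fun_mem (L := opsLanguage 𝓕) ⟨F.2, hF⟩ v hv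

end

namespace FirstOrder.Language.Substructure

variable {L : FirstOrder.Language.{w, v}} {M : Type w} [L.Structure M]

theorem card_closure_lt {κ : Cardinal.{w}} (hκ : ℵ₀ < κ) {s : Set M} (hs : #s < κ)
    (hL : #(Σ n, L.Functions n) < κ) : #(closure L s) < κ := by
  have h := lift_card_closure_le (L := L) (s := s)
  simp only [lift_id] at h
  exact h.trans_lt (max_lt hκ (add_lt_of_lt hκ.le hs hL))

theorem coe_closure_iUnion_of_directed {ι : Type*} [Nonempty ι] {s : ι → Set M}
    (hs : Directed (· ⊆ ·) s) :
    (closure L (⋃ i, s i) : Set M) = ⋃ i, (closure L (s i) : Set M) := by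
  have hdir : Directed (· ≤ ·) fun i => closure L (s i) :=
    hs.mono_comp _ fun _ _ h => closure_mono h
  ext x
  rw [closure_iUnion, SetLike.mem_coe, mem_iSup_of_directed hdir, mem_iUnion]
  rfl

theorem coe_closure_setOf_lt_of_isSuccLimit {ι : Type*} [LinearOrder ι] (r : M → ι) {γ : ι}
    (hγ : Order.IsSuccLimit γ) :
    (closure L {x | r x < γ} : Set M) = ⋃ α, ⋃ _ : α < γ, (closure L {x | r x < α} : Set M) := by
  have : Nonempty (Iio γ) := hγ.nonempty_Iio.to_subtype
  have hdir : Directed (· ⊆ ·) fun α : Iio γ => {x | r x < α} :=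
    Monotone.directed_le fun α β h _ hx => lt_of_lt_of_le hx h
  have hunion : {x | r x < γ} = ⋃ α : Iio γ, {x | r x < α} := by
    ext x
    simp only [mem_iUnion, Subtype.exists, mem_Iio, exists_prop]
    exact hγ.lt_iff_exists_lt
  rw [hunion, coe_closure_iUnion_of_directed hdir, iUnion_subtype]
  rfl

end FirstOrder.Language.Substructure

theorem exists_not_rel_of_card_lt_evalTriple {A B : Type w} {E : A → B → Prop} {X : Set B}
    (hX : #X < evalTriple E) : ∃ x : A, ∀ y ∈ X, ¬ E x y := by
  by_contra! h
  exact hX.not_ge (csInf_le' ⟨X, rfl, h⟩)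

theorem Cardinal.exists_injective_lt_ord (B : Type w) :
    ∃ r : B → Ordinal.{w}, Function.Injective r ∧ ∀ b, r b < (#B).ord := by
  obtain ⟨r, _, hr⟩ := Cardinal.exists_ord_eq B
  exact ⟨Ordinal.typein r, Ordinal.typein_injective r, fun b => hr ▸ Ordinal.typein_lt_type r b⟩

theorem card_setOf_lt_le_card {B : Type w} {r : B → Ordinal.{w}} (hr : Function.Injective r)
    (α : Ordinal.{w}) : #{b | r b < α} ≤ α.card := by
  rw [← lift_le.{w+1}, ← Cardinal.mk_Iio_ordinal]
  refine (lift_mk_le'.2 ⟨⟨fun b : {b | r b < α} => (⟨r b, b.2⟩ : Set.Iio α), ?_⟩⟩).trans_eq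
    (lift_id'.{w, w + 1} _)
  exact fun b c h => Subtype.ext (hr (congrArg Subtype.val h))

theorem stmt2_general {A B : Type u} (E : A → B → Prop) (κ : Cardinal.{u}) (hunc : ℵ₀ < κ)
    (hκB : κ = #B) (hκx : κ = evalTriple E)
    (𝓕 : Set (Σ n : ℕ, (Fin n → B) → B)) (h𝓕 : #𝓕 < κ) :
    ∃ seq : Ordinal → Set B, IsPathway E 𝓕 κ.ord seq := by
  obtain ⟨r, hr_inj, hr_lt⟩ := Cardinal.exists_injective_lt_ord B
  rw [← hκB] at hr_lt
  have hcard : ∀ α < κ.ord, #(Substructure.closure (opsLanguage 𝓕) {b | r b < α}) < κ :=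
    fun α hα => Substructure.card_closure_lt hunc
      ((card_setOf_lt_le_card hr_inj α).trans_lt (lt_ord.1 hα))
      (card_sigma_functions_opsLanguage 𝓕 ▸ h𝓕)
  refine ⟨fun α => Substructure.closure (opsLanguage 𝓕) {b | r b < α}, ⟨?_, ?_, ?_, ?_, ?_⟩⟩
  · exact fun α β hαβ _ => Substructure.closure_mono fun b hb => lt_of_lt_of_le hb hαβ
  · exact fun γ _ hγ => Substructure.coe_closure_setOf_lt_of_isSuccLimit r hγ
  · refine eq_univ_of_forall fun b => mem_iUnion₂.2 ⟨Order.succ (r b), ?_, ?_⟩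
    · exact (isSuccLimit_ord hunc.le).succ_lt (hr_lt b)
    · exact Substructure.subset_closure (Order.lt_succ (r b))
  · exact fun α hα => exists_not_rel_of_card_lt_evalTriple (hκx ▸ hcard α hα)
  · exact fun _ _ _ hF => closedUnderOp_substructure _ hF

/-- if `B` is infinite, `κ` is an uncountable cardinal equal both to `|B|`
and to the evaluation of `⟨A,B,E⟩`, then for every family `𝓕` of finitary operations on
`B` with `|𝓕| < κ` there is a `⟨⟨A,B,E⟩, 𝓕, κ⟩`-pathway. -/
theorem stmt2 {A B : Type u} [Infinite B] (E : A → B → Prop)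
    (hE : ∀ a : A, ∃ b : B, E a b) (κ : Cardinal.{u}) (hunc : ℵ₀ < κ)
    (hκB : κ = #B) (hκx : κ = evalTriple E)
    (𝓕 : Set (Σ n : ℕ, (Fin n → B) → B)) (h𝓕 : #𝓕 < κ) :
    ∃ seq : Ordinal → Set B, IsPathway E 𝓕 κ.ord seq :=
  stmt2_general E κ hunc hκB hκx 𝓕 h𝓕
end

section
/- Let A, B be sets, E ⊆ A × B a relation, ℱ a family of finitary operations on B, and κ a cardinal. If there exists a ⟨⟨A,B,E⟩, ℱ, κ⟩-pathway, then there exists a set X ⊆ A with |X| ≤ κ such that for every b ∈ B there is x ∈ X with ¬(x E b). Consequently, the dual cardinal characteristic 𝔵* (the evaluation of ⟨B, A, ¬E⁻¹⟩) is at most κ. -/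
open Cardinal Set

theorem exists_avoiding_set_of_iUnion_eq_univ {ι : Type v} {A : Type u} {B : Type w}
    (E : A → B → Prop) (S : ι → Set B) (hcover : ⋃ i, S i = Set.univ)
    (havoid : ∀ i, ∃ x : A, ∀ y ∈ S i, ¬ E x y) :
    ∃ X : Set A, lift.{v} #X ≤ lift.{u} #ι ∧ ∀ b : B, ∃ x ∈ X, ¬ E x b := by
  choose x hx using havoid
  refine ⟨range x, mk_range_le_lift, fun b => ?_⟩
  obtain ⟨i, hi⟩ := mem_iUnion.mp (hcover ▸ mem_univ b)
  exact ⟨x i, mem_range_self i, hx i b hi⟩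

theorem evalTriple_le_mk {A B : Type u} (E : A → B → Prop) (X : Set B)
    (hX : ∀ a : A, ∃ b ∈ X, E a b) : evalTriple E ≤ #X :=
  csInf_le' ⟨X, rfl, hX⟩

theorem IsPathway.exists_avoiding_set {A B : Type u} {E : A → B → Prop}
    {𝓕 : Set (Σ n : ℕ, (Fin n → B) → B)} {κ : Cardinal.{u}} {seq : Ordinal → Set B}
    (hpath : IsPathway E 𝓕 κ.ord seq) :
    ∃ X : Set A, #X ≤ κ ∧ ∀ b : B, ∃ x ∈ X, ¬ E x b := by
  have hcover : ⋃ α : Iio κ.ord, seq α = Set.univ := by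
    rw [← hpath.total, iUnion_subtype]
    rfl
  obtain ⟨X, hXcard, hX⟩ := exists_avoiding_set_of_iUnion_eq_univ E (fun α : Iio κ.ord => seq α)
    hcover (fun α => hpath.avoid α α.2)
  rw [mk_Iio_ordinal, card_ord, lift_lift, lift_le] at hXcard
  exact ⟨X, hXcard, hX⟩

/-- a `⟨⟨A,B,E⟩, 𝓕, κ⟩`-pathway yields a set `X ⊆ A` of size at most `κ`
such that every `b ∈ B` fails to be `E`-dominated by some member of `X`; consequently the
dual cardinal characteristic, the evaluation of `⟨B, A, ¬E⁻¹⟩`, is at most `κ`. -/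
theorem stmt3 {A B : Type u} (E : A → B → Prop)
    (𝓕 : Set (Σ n : ℕ, (Fin n → B) → B)) (κ : Cardinal.{u})
    (seq : Ordinal → Set B) (hpath : IsPathway E 𝓕 κ.ord seq) :
    (∃ X : Set A, #X ≤ κ ∧ ∀ b : B, ∃ x ∈ X, ¬ E x b) ∧
      evalTriple (fun (b : B) (a : A) => ¬ E a b) ≤ κ := by
  obtain ⟨X, hXcard, hX⟩ := hpath.exists_avoiding_set
  exact ⟨⟨X, hXcard, hX⟩, (evalTriple_le_mk _ X hX).trans hXcard⟩
end

section
/- Let A, B be sets, E ⊆ A × B a relation, ℱ a family of finitary operations on B, and let δ be a limit ordinal. If there exists a ⟨⟨A,B,E⟩, ℱ, δ⟩-pathway, then there exists a ⟨⟨A,B,E⟩, ℱ, cf(δ)⟩-pathway, where cf(δ) is the cofinality of δ. -/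
open Cardinal Set

/- Re-index the pathway along a cofinal map `g : cf(δ) → δ`. The new `α`-th set is the union of
`seq (g ξ)` over `ξ < α`, so that continuity comes for free; `seq 0` is added so that the
zeroth set is not empty. Since `g` is monotone, the `α`-th set lies inside `seq (g α)`, which
keeps it non-dominating, and it is closed as a directed union of closed sets. -/

open Order

theorem ClosedUnderOp.iUnion_of_directed {B : Type*} {ι : Sort*} [Nonempty ι] {S : ι → Set B}
    (hS : Directed (· ⊆ ·) S) {F : Σ n : ℕ, (Fin n → B) → B} (h : ∀ i, ClosedUnderOp (S i) F) :
    ClosedUnderOp (⋃ i, S i) F := by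
  intro v hv
  choose i hi using fun k => mem_iUnion.1 (hv k)
  obtain ⟨j, hj⟩ := hS.finite_le i
  exact mem_iUnion.2 ⟨j, h j v fun k => hj k (hi k)⟩

section Reindex

variable {A B : Type*} {E : A → B → Prop} {𝓕 : Set (Σ n : ℕ, (Fin n → B) → B)}
  {seq : Ordinal → Set B} {κ δ : Ordinal}

theorem IsPathway.closedUnderOp_iUnion (h : IsPathway E 𝓕 δ seq) {ι : Sort*} [Nonempty ι]
    (β : ι → Iio δ) {F : Σ n : ℕ, (Fin n → B) → B} (hF : F ∈ 𝓕) :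
    ClosedUnderOp (⋃ i, seq (β i)) F :=
  ClosedUnderOp.iUnion_of_directed
    ((Std.Total.directed β).mono_comp (· ≤ ·) (g := fun γ : Iio δ => seq γ)
      fun γ γ' hγ => h.mono γ γ' hγ γ'.2)
    fun i => h.closedF _ (β i).2 F hF

def reindexedSeq (seq : Ordinal → Set B) (g : Iio κ → Iio δ) (α : Ordinal) : Set B :=
  seq 0 ∪ ⋃ (ξ : Iio κ) (_ : ξ.1 < α), seq (g ξ)

variable {g : Iio κ → Iio δ}

theorem seq_subset_reindexedSeq {ξ : Iio κ} {α : Ordinal} (hξ : ξ.1 < α) :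
    seq (g ξ) ⊆ reindexedSeq seq g α :=
  subset_union_of_subset_right (subset_biUnion_of_mem (u := fun ξ => seq (g ξ)) hξ) _

theorem monotone_reindexedSeq : Monotone (reindexedSeq seq g) :=
  fun _ _ hαβ => union_subset_union_right _ <|
    biUnion_mono (fun _ hξ => lt_of_lt_of_le hξ hαβ) fun _ _ => subset_rfl

theorem reindexedSeq_of_isSuccLimit {γ : Ordinal} (hγ : IsSuccLimit γ) :
    reindexedSeq seq g γ = ⋃ (α : Ordinal) (_ : α < γ), reindexedSeq seq g α := by
  ext x
  simp only [reindexedSeq, mem_iUnion, mem_union]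
  constructor
  · rintro (hx | ⟨ξ, hξ, hx⟩)
    · exact ⟨0, hγ.bot_lt, Or.inl hx⟩
    · exact ⟨ξ + 1, hγ.succ_lt hξ, Or.inr ⟨ξ, lt_add_one _, hx⟩⟩
  · rintro ⟨α, hα, hx | ⟨ξ, hξ, hx⟩⟩
    · exact Or.inl hx
    · exact Or.inr ⟨ξ, hξ.trans hα, hx⟩

theorem IsPathway.reindexedSeq_subset (h : IsPathway E 𝓕 δ seq) (hg : Monotone g) (α : Iio κ) :
    reindexedSeq seq g α ⊆ seq (g α) :=
  union_subset (h.mono _ _ zero_le (g α).2) <|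
    iUnion₂_subset fun _ hξ => h.mono _ _ (hg (le_of_lt hξ)) (g α).2

theorem IsPathway.closedUnderOp_reindexedSeq (h : IsPathway E 𝓕 δ seq) (α : Iio κ)
    {F : Σ n : ℕ, (Fin n → B) → B} (hF : F ∈ 𝓕) : ClosedUnderOp (reindexedSeq seq g α) F := by
  have hδ : (0 : Ordinal) < δ := zero_le.trans_lt (g α).2
  have hunion : reindexedSeq seq g α =
      ⋃ o : Option {ξ : Iio κ // ξ.1 < α}, seq (o.elim ⟨0, hδ⟩ fun ξ => g ξ : Iio δ) := by
    rw [iUnion_option, reindexedSeq, iUnion_subtype (fun ξ : Iio κ => ξ.1 < α.1)]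
    rfl
  rw [hunion]
  exact h.closedUnderOp_iUnion _ hF

theorem IsPathway.reindex (h : IsPathway E 𝓕 δ seq) (hκ : IsSuccLimit κ) (hg : Monotone g)
    (hcof : IsCofinal (range g)) : IsPathway E 𝓕 κ (reindexedSeq seq g) where
  mono _ _ hαβ _ := monotone_reindexedSeq hαβ
  cont _ _ hγ := reindexedSeq_of_isSuccLimit hγ
  total := by
    refine eq_univ_of_forall fun x => ?_
    obtain ⟨β, hβ, hx⟩ := mem_iUnion₂.1 (h.total ▸ mem_univ x)
    obtain ⟨_, ⟨ξ, rfl⟩, hβξ⟩ := hcof ⟨β, hβ⟩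
    exact mem_iUnion₂.2 ⟨ξ + 1, hκ.succ_lt ξ.2,
      seq_subset_reindexedSeq (lt_add_one _) (h.mono _ _ hβξ (g ξ).2 hx)⟩
  avoid α hα := by
    obtain ⟨x, hx⟩ := h.avoid _ (g ⟨α, hα⟩).2
    exact ⟨x, fun y hy => hx y (h.reindexedSeq_subset hg ⟨α, hα⟩ hy)⟩
  closedF α hα _ hF := h.closedUnderOp_reindexedSeq ⟨α, hα⟩ hF

end Reindex

/-- if `δ` is a limit ordinal and there is a `⟨⟨A,B,E⟩, 𝓕, δ⟩`-pathway,
then there is a `⟨⟨A,B,E⟩, 𝓕, cf(δ)⟩`-pathway. -/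
theorem stmt4 {A B : Type u} (E : A → B → Prop)
    (𝓕 : Set (Σ n : ℕ, (Fin n → B) → B)) (δ : Ordinal.{u}) (hδ : Order.IsSuccLimit δ)
    (seq : Ordinal → Set B) (hpath : IsPathway E 𝓕 δ seq) :
    ∃ seq' : Ordinal → Set B, IsPathway E 𝓕 δ.cof.ord seq' := by
  obtain ⟨g, hg⟩ := Ordinal.exists_isFundamentalSeq (o := δ) rfl
  have hlim : IsSuccLimit δ.cof.ord :=
    isSuccLimit_ord <| Ordinal.aleph0_le_cof_iff.2 (Ordinal.one_lt_cof_iff.2 hδ)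
  exact ⟨_, hpath.reindex hlim hg.strictMono.monotone hg.isCofinal_range⟩
end

section
/- Let B be a set, E ⊆ B × B a relation, ℱ a family of finitary operations on B, and κ a regular cardinal. If there exists a ⟨⟨B,B,E⟩, ℱ, κ⟩-pathway, then there exists a ⟨⟨B,B,E⟩, ℱ, κ⟩-pathway ⟨B_α : α < κ⟩ additionally satisfying: for every α < κ there exists x ∈ B_{α+1} such that ¬(x E y) for all y ∈ B_α. -/
open Cardinal Set

/-!
For each `α < κ` some stage `g α < κ` of the pathway already contains a witness that `seq α`
is not dominating. Reindex the pathway along a normal function `h` whose successor steps jump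
past `g`, i.e. `g (h α) ≤ h (α + 1)`: the witness for `seq (h α)` then lies in `seq (h (α + 1))`.
Normality of `h` keeps the reindexed sequence continuous, and regularity of `κ` keeps `h` below
`κ` at limit stages.
-/

open Order

namespace Ordinal

noncomputable def normalAbove (g : Ordinal.{u} → Ordinal.{u}) (o : Ordinal.{u}) : Ordinal.{u} :=
  limitRecOn o 0 (fun _ a => max (a + 1) (g a)) fun a _ f => ⨆ b : Iio a, f b b.2

variable (g : Ordinal.{u} → Ordinal.{u})

theorem normalAbove_zero : normalAbove g 0 = 0 :=
  limitRecOn_zero ..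

theorem normalAbove_add_one (o : Ordinal) :
    normalAbove g (o + 1) = max (normalAbove g o + 1) (g (normalAbove g o)) :=
  limitRecOn_add_one ..

theorem normalAbove_limit {o : Ordinal} (ho : IsSuccLimit o) :
    normalAbove g o = ⨆ b : Iio o, normalAbove g b :=
  limitRecOn_limit _ _ _ _ ho

theorem le_normalAbove_add_one (o : Ordinal) : g (normalAbove g o) ≤ normalAbove g (o + 1) :=
  (normalAbove_add_one g o).symm ▸ le_max_right _ _

theorem isNormal_normalAbove : IsNormal (normalAbove g) := by
  refine IsNormal.of_succ_lt (fun o ↦ ?_) @fun o ho ↦ ?_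
  · rw [succ_eq_add_one, normalAbove_add_one]
    exact (lt_add_one _).trans_le (le_max_left _ _)
  · rw [normalAbove_limit g ho, Set.image_eq_range]
    have := ho.nonempty_Iio.to_subtype
    exact isLUB_ciSup bddAbove_of_small

theorem normalAbove_lt_ord {κ : Cardinal.{u}} (hκ : κ.IsRegular) (hg : ∀ o < κ.ord, g o < κ.ord)
    {o : Ordinal} : o < κ.ord → normalAbove g o < κ.ord := by
  induction o using limitRecOn with
  | zero =>
    intro _
    rw [normalAbove_zero]
    exact (isSuccLimit_ord hκ.aleph0_le).bot_lt
  | add_one o ih =>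
    intro ho
    have ho' := ih ((lt_add_one o).trans ho)
    rw [normalAbove_add_one]
    exact max_lt ((isSuccLimit_ord hκ.aleph0_le).add_one_lt ho') (hg _ ho')
  | limit o ho ih =>
    intro hoκ
    rw [normalAbove_limit g ho]
    apply lift_iSup_lt_of_lt_cof
    · rwa [← lift_cof, hκ.cof_ord, Cardinal.mk_Iio_ordinal, Cardinal.lift_lift,
        Cardinal.lift_lt, ← lt_ord]
    · exact fun b ↦ ih b.1 b.2 (b.2.trans hoκ)

end Ordinal

namespace IsPathway

variable {A B : Type*} {𝓕 : Set (Σ n : ℕ, (Fin n → B) → B)} {δ : Ordinal}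
  {seq : Ordinal → Set B}

theorem comp_isNormal {E : A → B → Prop} (hp : IsPathway E 𝓕 δ seq) {f : Ordinal → Ordinal}
    (hf : IsNormal f) (hfδ : ∀ α < δ, f α < δ) : IsPathway E 𝓕 δ (seq ∘ f) where
  mono α β hαβ hβ := hp.mono _ _ (hf.monotone hαβ) (hfδ β hβ)
  cont γ hγδ hγ := by
    rw [Function.comp_apply, hp.cont _ (hfδ γ hγδ) (hf.map_isSuccLimit hγ)]
    ext z
    simp only [mem_iUnion, Function.comp_apply]
    constructor
    · rintro ⟨α, hα, hz⟩
      obtain ⟨β, hβγ, hαβ⟩ := (hf.lt_iff_exists_lt hγ).1 hα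
      exact ⟨β, hβγ, hp.mono _ _ hαβ.le (hfδ β (hβγ.trans hγδ)) hz⟩
    · rintro ⟨β, hβγ, hz⟩
      exact ⟨f β, hf.strictMono hβγ, hz⟩
  total := by
    refine eq_univ_of_univ_subset (hp.total ▸ ?_)
    simp only [iUnion_subset_iff]
    intro α hα
    exact (hp.mono _ _ hf.strictMono.le_apply (hfδ α hα)).trans
      (subset_biUnion_of_mem (u := seq ∘ f) hα)
  avoid α hα := hp.avoid (f α) (hfδ α hα)
  closedF α hα := hp.closedF (f α) (hfδ α hα)

theorem exists_stage_avoiding {E : B → B → Prop} (hp : IsPathway E 𝓕 δ seq) :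
    ∃ g : Ordinal → Ordinal, ∀ α < δ, g α < δ ∧ ∃ x ∈ seq (g α), ∀ y ∈ seq α, ¬ E x y := by
  have key : ∀ α < δ, ∃ β, β < δ ∧ ∃ x ∈ seq β, ∀ y ∈ seq α, ¬ E x y := by
    intro α hα
    obtain ⟨x, hx⟩ := hp.avoid α hα
    obtain ⟨β, hβ, hxβ⟩ := mem_iUnion₂.1 (hp.total.symm ▸ mem_univ x : x ∈ ⋃ β < δ, seq β)
    exact ⟨β, hβ, x, hxβ, hx⟩
  choose! g hg using key
  exact ⟨g, hg⟩

end IsPathway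

/-- when `A = B`, a `⟨⟨B,B,E⟩, 𝓕, κ⟩`-pathway (`κ` regular) can be improved
to one where the witness to non-domination of `seq α` can be found inside `seq (α+1)`. -/
theorem stmt5 {B : Type u} (E : B → B → Prop)
    (𝓕 : Set (Σ n : ℕ, (Fin n → B) → B)) (κ : Cardinal.{u}) (hκ : κ.IsRegular)
    (seq : Ordinal → Set B) (hpath : IsPathway E 𝓕 κ.ord seq) :
    ∃ seq' : Ordinal → Set B, IsPathway E 𝓕 κ.ord seq' ∧
      ∀ α : Ordinal, α < κ.ord →
        ∃ x ∈ seq' (α + 1), ∀ y ∈ seq' α, ¬ E x y := by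
  obtain ⟨g, hg⟩ := hpath.exists_stage_avoiding
  set h := Ordinal.normalAbove g
  have hhκ : ∀ α < κ.ord, h α < κ.ord :=
    fun α ↦ Ordinal.normalAbove_lt_ord g hκ fun β hβ ↦ (hg β hβ).1
  refine ⟨seq ∘ h, hpath.comp_isNormal (Ordinal.isNormal_normalAbove g) hhκ, fun α hα ↦ ?_⟩
  obtain ⟨-, x, hx, hxavoid⟩ := hg (h α) (hhκ α hα)
  have hα1 : α + 1 < κ.ord := (isSuccLimit_ord hκ.aleph0_le).add_one_lt hα
  exact ⟨x, hpath.mono _ _ (Ordinal.le_normalAbove_add_one g α) (hhκ _ hα1) hx, hxavoid⟩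
end

section
/- Let X⃗ = ⟨Xₙ : n < ω⟩ be a decreasing sequence of subsets of ω with ⋂ₙ Xₙ = ∅, and let f : ω → ω. Then ps(X⃗,f) = ⋃ₙ (Xₙ ∩ [0, f(n))) satisfies: (a) ps(X⃗,f) ⊆ X₀; (b) ps(X⃗,f) ∖ Xₙ is finite for every n < ω (i.e. ps(X⃗,f) is a pseudointersection of X⃗); and (c) if additionally each Xₙ is infinite and f ≰* f_{X⃗}, then ps(X⃗,f) is infinite. -/
open Set

/-- The pseudointersection of the sequence `X` with growth controlled by `f`:
`ps(X⃗, f) = ⋃ₙ (Xₙ ∩ [0, f n))`. -/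
def psInt (X : ℕ → Set ℕ) (f : ℕ → ℕ) : Set ℕ :=
  ⋃ n, X n ∩ Set.Iio (f n)

/-- The "fast-enough-growing function" of a sequence of subsets of `ℕ`:
`f_{X⃗}(0) = min X₀ + 1`, `f_{X⃗}(n+1) = min {k : k > f_{X⃗}(n) ∧ k ∈ X_{n+1}} + 1`. -/
noncomputable def fseq (X : ℕ → Set ℕ) : ℕ → ℕ
  | 0 => sInf (X 0) + 1
  | n + 1 => sInf {k | fseq X n < k ∧ k ∈ X (n + 1)} + 1

/-! Since `Xₙ` is decreasing, a point of `ps(X⃗, f)` outside `Xₙ` comes from some `Xₘ ∩ [0, f m)`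
with `m < n`, so `ps(X⃗, f) ∖ Xₙ` lies in the finite set `[0, max_{m<n} f m)`. For (c), the point
`f_{X⃗}(n) - 1` lies in `Xₙ`, so it lies in `ps(X⃗, f)` whenever `f_{X⃗}(n) < f n`; this happens for
infinitely many `n`, and `f_{X⃗}` is strictly increasing. -/

section

variable {X : ℕ → Set ℕ} {f : ℕ → ℕ}

theorem psInt_subset_zero (hX : Antitone X) : psInt X f ⊆ X 0 :=
  iUnion_subset fun n => inter_subset_left.trans (hX n.zero_le)

theorem psInt_diff_subset (hX : Antitone X) (n : ℕ) :
    psInt X f \ X n ⊆ ⋃ m ∈ Iio n, Iio (f m) := by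
  rintro x ⟨hx, hxn⟩
  obtain ⟨m, hxm, hxf⟩ := mem_iUnion.1 hx
  have hmn : m < n := lt_of_not_ge fun hnm => hxn (hX hnm hxm)
  exact mem_biUnion hmn hxf

theorem psInt_diff_finite (hX : Antitone X) (n : ℕ) : (psInt X f \ X n).Finite :=
  ((finite_Iio n).biUnion fun m _ => finite_Iio (f m)).subset (psInt_diff_subset hX n)

theorem fseq_sub_one_mem_zero (hX : (X 0).Nonempty) : fseq X 0 - 1 ∈ X 0 := by
  simpa [fseq] using Nat.sInf_mem hX

theorem fseq_lt_fseq_succ_sub_one_and_mem {n : ℕ} (hX : (X (n + 1)).Infinite) :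
    fseq X n < fseq X (n + 1) - 1 ∧ fseq X (n + 1) - 1 ∈ X (n + 1) := by
  obtain ⟨k, hk, hgt⟩ := hX.exists_gt (fseq X n)
  simpa [fseq] using Nat.sInf_mem (s := {k | fseq X n < k ∧ k ∈ X (n + 1)}) ⟨k, hgt, hk⟩

theorem fseq_sub_one_mem (hX : ∀ n, (X n).Infinite) (n : ℕ) : fseq X n - 1 ∈ X n := by
  cases n with
  | zero => exact fseq_sub_one_mem_zero (hX 0).nonempty
  | succ n => exact (fseq_lt_fseq_succ_sub_one_and_mem (hX (n + 1))).2

theorem fseq_strictMono (hX : ∀ n, (X n).Infinite) : StrictMono (fseq X) :=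
  strictMono_nat_of_lt_succ fun n =>
    (fseq_lt_fseq_succ_sub_one_and_mem (hX (n + 1))).1.trans_le (Nat.sub_le _ _)

theorem fseq_sub_one_mem_psInt (hX : ∀ n, (X n).Infinite) {n : ℕ} (hn : fseq X n < f n) :
    fseq X n - 1 ∈ psInt X f :=
  mem_iUnion.2 ⟨n, fseq_sub_one_mem hX n, (Nat.sub_le _ _).trans_lt hn⟩

theorem psInt_infinite (hX : ∀ n, (X n).Infinite) (hf : ∃ᶠ n in Filter.atTop, fseq X n < f n) :
    (psInt X f).Infinite := by
  refine infinite_of_forall_exists_gt fun a => ?_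
  obtain ⟨n, hna, hn⟩ := (Filter.frequently_atTop.1 hf) (a + 2)
  have hle : n ≤ fseq X n := (fseq_strictMono hX).le_apply
  exact ⟨fseq X n - 1, fseq_sub_one_mem_psInt hX hn, by omega⟩

end

theorem stmt6_general (X : ℕ → Set ℕ) (hdec : Antitone X)
    (f : ℕ → ℕ) :
    psInt X f ⊆ X 0 ∧
    (∀ n, (psInt X f \ X n).Finite) ∧
    ((∀ n, (X n).Infinite) → ¬ (∀ᶠ n in Filter.atTop, f n ≤ fseq X n) →
      (psInt X f).Infinite) := by
  refine ⟨psInt_subset_zero hdec, psInt_diff_finite hdec, fun hinf hnot => ?_⟩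
  rw [Filter.not_eventually] at hnot
  exact psInt_infinite hinf (hnot.mono fun n => lt_of_not_ge)

/-- for a decreasing sequence `X⃗` of subsets of `ω` with empty intersection
and any `f : ω → ω`: (a) `ps(X⃗,f) ⊆ X₀`; (b) `ps(X⃗,f) ∖ Xₙ` is finite for every `n`;
and (c) if moreover every `Xₙ` is infinite and `f ≰* f_{X⃗}`, then `ps(X⃗,f)` is infinite. -/
theorem stmt6 (X : ℕ → Set ℕ) (hdec : Antitone X) (hempty : (⋂ n, X n) = ∅)
    (f : ℕ → ℕ) :
    psInt X f ⊆ X 0 ∧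
    (∀ n, (psInt X f \ X n).Finite) ∧
    ((∀ n, (X n).Infinite) → ¬ (∀ᶠ n in Filter.atTop, f n ≤ fseq X n) →
      (psInt X f).Infinite) :=
  stmt6_general X hdec f
end

section
/- Fix functions cd : ω^ω → 𝔓(ω)^{↓ω} and dcd : 𝔓(ω)^{↓ω} → ω^ω with cd ∘ dcd = id, where 𝔓(ω)^{↓ω} is the set of decreasing sequences of subsets of ω with empty intersection, and let eₙ(⟨X_m : m<ω⟩) = Xₙ. Define the unary operations on ω^ω: F_c(h) = dcd(⟨(ω ∖ e₀(cd(h))) ∖ n : n < ω⟩), F_f(h) = f_{cd(h)}, F_s(h) = dcd(⟨e₀(cd(h)) ∖ n : n < ω⟩); and the binary operations: F_p(g,h) = dcd(⟨ps(cd(g), h) ∖ n : n < ω⟩) and F_i(g,h) = dcd(⟨eₙ(cd(g)) ∩ eₙ(cd(h)) : n < ω⟩). Let ℱ_{P-pt} = {F_c, F_f, F_s, F_i, F_p}. If κ is a regular cardinal and there exists a ⟨𝔡, ℱ_{P-pt}, κ⟩-pathway, then there exists a P-point. -/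
open Cardinal Set

/-- The eventual domination relation `f ≤* g` on `ω^ω`. -/
def evDomLE (f g : ℕ → ℕ) : Prop := ∀ᶠ n in Filter.atTop, f n ≤ g n

/-- The fast-enough-growing function `f_{X⃗}`: constantly `0` if some `Xₙ` is finite,
and given by the recursion `fseq` otherwise. -/
noncomputable def fgrow (X : ℕ → Set ℕ) : ℕ → ℕ := by
  classical exact if ∀ n, (X n).Infinite then fseq X else fun _ => 0

section PPointOps

variable (cd : (ℕ → ℕ) → (ℕ → Set ℕ)) (dcd : (ℕ → Set ℕ) → (ℕ → ℕ))

/-- `F_c(h) = dcd ⟨(ω ∖ e₀(cd h)) ∖ n : n < ω⟩`. -/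
noncomputable def Fc (h : ℕ → ℕ) : ℕ → ℕ :=
  dcd (fun n => (cd h 0)ᶜ \ Set.Iio n)

/-- `F_f(h) = f_{cd h}`. -/
noncomputable def Ff (h : ℕ → ℕ) : ℕ → ℕ := fgrow (cd h)

/-- `F_s(h) = dcd ⟨e₀(cd h) ∖ n : n < ω⟩`. -/
noncomputable def Fs (h : ℕ → ℕ) : ℕ → ℕ :=
  dcd (fun n => cd h 0 \ Set.Iio n)

/-- `F_p(g,h) = dcd ⟨ps(cd g, h) ∖ n : n < ω⟩`. -/
noncomputable def Fp (g h : ℕ → ℕ) : ℕ → ℕ :=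
  dcd (fun n => psInt (cd g) h \ Set.Iio n)

/-- `F_i(g,h) = dcd ⟨eₙ(cd g) ∩ eₙ(cd h) : n < ω⟩`. -/
noncomputable def Fi (g h : ℕ → ℕ) : ℕ → ℕ :=
  dcd (fun n => cd g n ∩ cd h n)

/-- The family `ℱ_{P-pt} = {F_c, F_f, F_s, F_i, F_p}` as finitary operations on `ω^ω`. -/
noncomputable def PPtOps : Set (Σ n : ℕ, (Fin n → (ℕ → ℕ)) → (ℕ → ℕ)) :=
  {⟨1, fun v => Fc cd dcd (v 0)⟩, ⟨1, fun v => Ff cd (v 0)⟩,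
   ⟨1, fun v => Fs cd dcd (v 0)⟩, ⟨2, fun v => Fi cd dcd (v 0) (v 1)⟩,
   ⟨2, fun v => Fp cd dcd (v 0) (v 1)⟩}

end PPointOps

open Filter Order

/-!
We build a decreasing tower of filters `F_α` (`α ≤ κ`), starting from the cofinite filter and
taking infima at limits. For `α < κ`, `F_α` has, up to finite sets, a base of sets `W` whose
tail sequences `⟨W ∖ n⟩` are all coded at one level `μ < κ` of the pathway. To pass to
`F_{α+1}` fix an ultrafilter `V ⊇ F_α` and an `f` dominated by nothing in level
`ρ = max μ α`, and adjoin `ps(X, f)` for every `X` coded at level `ρ` with all `Xₙ ∈ V`.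
Such a set is infinite because `f_X` lies in level `ρ` (closure under `F_f`), so `f` escapes it
infinitely often; intersecting `X` with a coded base set (closure under `F_i`) keeps the new
filter proper and, via `F_p`, gives it a coded base again. Closure under `F_s` and `F_c` makes
`F_{α+1}` decide `e₀(cd h)` for each `h` at level `α`, and `ps(cd h, f)` is a pseudointersection
of `cd h`. Since `κ` is regular and (no pathway having length `ω`) uncountable, the levels stay
below `κ` at limits and every countable subfamily of `F_κ` lies in some `F_α`; hence the
ultrafilter `F_κ` is a P-point.
-/

def tailSeq (A : Set ℕ) (n : ℕ) : Set ℕ := A \ Iio n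

lemma antitone_tailSeq (A : Set ℕ) : Antitone (tailSeq A) :=
  fun _ _ hmn _ hx => ⟨hx.1, fun h => hx.2 (lt_of_lt_of_le h hmn)⟩

lemma iInter_tailSeq (A : ℕ → Set ℕ) : ⋂ n, tailSeq (A n) n = ∅ :=
  eq_empty_of_forall_notMem fun x hx => (mem_iInter.1 hx (x + 1)).2 (Nat.lt_succ_self x)

@[simp] lemma tailSeq_zero (A : Set ℕ) : tailSeq A 0 = A := by
  simp [tailSeq]

lemma tailSeq_mem {L : Filter ℕ} (hL : L ≤ cofinite) {A : Set ℕ} (hA : A ∈ L) (n : ℕ) :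
    tailSeq A n ∈ L :=
  sdiff_mem hA (hL (finite_Iio n).compl_mem_cofinite)

lemma infinite_of_mem_of_le_cofinite {α : Type*} {L : Filter α} [L.NeBot] (hL : L ≤ cofinite)
    {A : Set α} (hA : A ∈ L) : A.Infinite :=
  fun hfin => compl_notMem hA (hL hfin.compl_mem_cofinite)

lemma psInt_mono {X Y : ℕ → Set ℕ} (h : ∀ n, X n ⊆ Y n) (f : ℕ → ℕ) :
    psInt X f ⊆ psInt Y f :=
  iUnion_mono fun n => inter_subset_inter_left _ (h n)

lemma psInt_subset {X : ℕ → Set ℕ} (hX : Antitone X) (f : ℕ → ℕ) : psInt X f ⊆ X 0 :=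
  iUnion_subset fun n => inter_subset_left.trans (hX (Nat.zero_le n))

lemma finite_psInt_diff {X : ℕ → Set ℕ} (hX : Antitone X) (f : ℕ → ℕ) (m : ℕ) :
    (psInt X f \ X m).Finite := by
  refine ((finite_Iio m).biUnion fun n _ => finite_Iio (f n)).subset ?_
  rintro x ⟨hx, hxm⟩
  obtain ⟨n, hxn, hxf⟩ := mem_iUnion.1 hx
  exact mem_biUnion (lt_of_not_ge fun hmn => hxm (hX hmn hxn)) hxf

section Fseq

variable {X : ℕ → Set ℕ}

lemma exists_mem_between_fseq (hX : ∀ n, (X n).Infinite) (n : ℕ) :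
    ∃ k ∈ X (n + 1), fseq X n < k ∧ k < fseq X (n + 1) := by
  obtain ⟨b, hb, hlt⟩ := (hX (n + 1)).exists_gt (fseq X n)
  have hk := Nat.sInf_mem (s := {k | fseq X n < k ∧ k ∈ X (n + 1)}) ⟨b, hlt, hb⟩
  exact ⟨_, hk.2, hk.1, by rw [fseq]; exact Nat.lt_succ_self _⟩

lemma lt_fseq (hX : ∀ n, (X n).Infinite) (n : ℕ) : n < fseq X n := by
  induction n with
  | zero => rw [fseq]; exact Nat.succ_pos _
  | succ m ih =>
    obtain ⟨k, -, hk₁, hk₂⟩ := exists_mem_between_fseq hX m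
    omega

/-- Each escape `f_X(n + 1) < f(n + 1)` puts the witness defining `f_X(n + 1)`, which exceeds
`n`, into `ps(X, f)`. -/
lemma infinite_psInt (hX : ∀ n, (X n).Infinite) {f : ℕ → ℕ} (hf : ¬ evDomLE f (fgrow X)) :
    (psInt X f).Infinite := by
  rw [evDomLE, not_eventually] at hf
  refine infinite_of_forall_exists_gt fun a => ?_
  obtain ⟨n, hn, hfn⟩ := ((eventually_gt_atTop a).and_frequently hf).exists
  obtain ⟨m, rfl⟩ : ∃ m, n = m + 1 := ⟨n - 1, by omega⟩
  obtain ⟨k, hkX, hk₁, hk₂⟩ := exists_mem_between_fseq hX m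
  rw [fgrow, if_pos hX] at hfn
  have := lt_fseq hX m
  exact ⟨k, mem_iUnion.2 ⟨m + 1, hkX, by simp only [mem_Iio]; omega⟩, by omega⟩

end Fseq

lemma IsPathway.exists_lt_mem {A B : Type*} {E : A → B → Prop}
    {𝓕 : Set (Σ n : ℕ, (Fin n → B) → B)} {δ : Ordinal} {seq : Ordinal → Set B}
    (h : IsPathway E 𝓕 δ seq) (b : B) : ∃ α < δ, b ∈ seq α := by
  have hb : b ∈ ⋃ α, ⋃ (_ : α < δ), seq α := h.total ▸ mem_univ b
  simpa using hb

/-- Diagonalise against one undominated function per level. -/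
theorem not_isPathway_evDomLE_omega0 (𝓕 : Set (Σ n : ℕ, (Fin n → ℕ → ℕ) → ℕ → ℕ))
    (seq : Ordinal → Set (ℕ → ℕ)) : ¬ IsPathway evDomLE 𝓕 Ordinal.omega0 seq := by
  intro hpath
  choose x hx using fun n : ℕ => hpath.avoid n (Ordinal.natCast_lt_omega0 n)
  obtain ⟨ν, hν, hg⟩ := hpath.exists_lt_mem fun k => (Finset.range (k + 1)).sup (x · k)
  obtain ⟨m, rfl⟩ := Ordinal.lt_omega0.1 hν
  refine hx m _ hg (eventually_atTop.2 ⟨m, fun k hk => ?_⟩)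
  exact Finset.le_sup (f := (x · k)) (Finset.mem_range.2 (Nat.lt_succ_of_le hk))

lemma Cardinal.IsRegular.iSup_lt_ord {κ : Cardinal.{u}} (hκ : κ.IsRegular) {β : Type v}
    (hβ : Cardinal.lift.{u} #β < Cardinal.lift.{v} κ) {f : β → Ordinal.{u}}
    (hf : ∀ i, f i < κ.ord) : ⨆ i, f i < κ.ord :=
  Ordinal.lift_iSup_lt_of_lt_cof (by rwa [← Ordinal.lift_cof, hκ.cof_ord]) hf

structure CodedPathway (cd : (ℕ → ℕ) → (ℕ → Set ℕ)) (dcd : (ℕ → Set ℕ) → (ℕ → ℕ))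
    (δ : Ordinal) (seq : Ordinal → Set (ℕ → ℕ)) : Prop where
  antitone_cd : ∀ h, Antitone (cd h)
  iInter_cd : ∀ h, ⋂ n, cd h n = ∅
  cd_dcd : ∀ X : ℕ → Set ℕ, Antitone X → ⋂ n, X n = ∅ → cd (dcd X) = X
  isPathway : IsPathway evDomLE (PPtOps cd dcd) δ seq

def CodedAt (cd : (ℕ → ℕ) → (ℕ → Set ℕ)) (seq : Ordinal → Set (ℕ → ℕ)) (μ : Ordinal)
    (X : ℕ → Set ℕ) : Prop :=
  ∃ h ∈ seq μ, cd h = X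

namespace CodedPathway

variable {cd : (ℕ → ℕ) → (ℕ → Set ℕ)} {dcd : (ℕ → Set ℕ) → (ℕ → ℕ)} {δ : Ordinal}
  {seq : Ordinal → Set (ℕ → ℕ)} {μ ν : Ordinal} {X Y : ℕ → Set ℕ}

lemma antitone_of_codedAt (P : CodedPathway cd dcd δ seq) (hX : CodedAt cd seq μ X) :
    Antitone X := by
  obtain ⟨h, -, rfl⟩ := hX
  exact P.antitone_cd h

lemma codedAt_mono (P : CodedPathway cd dcd δ seq) (hμν : μ ≤ ν) (hν : ν < δ)
    (hX : CodedAt cd seq μ X) : CodedAt cd seq ν X := by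
  obtain ⟨h, hh, rfl⟩ := hX
  exact ⟨h, P.isPathway.mono μ ν hμν hν hh, rfl⟩

lemma exists_lt_codedAt (P : CodedPathway cd dcd δ seq) (hX : Antitone X)
    (hX' : ⋂ n, X n = ∅) : ∃ μ < δ, CodedAt cd seq μ X := by
  obtain ⟨μ, hμ, hmem⟩ := P.isPathway.exists_lt_mem (dcd X)
  exact ⟨μ, hμ, dcd X, hmem, P.cd_dcd X hX hX'⟩

lemma unary_mem (P : CodedPathway cd dcd δ seq) (hμ : μ < δ) {F : (ℕ → ℕ) → ℕ → ℕ}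
    (hF : ⟨1, fun v => F (v 0)⟩ ∈ PPtOps cd dcd) {h : ℕ → ℕ} (hh : h ∈ seq μ) :
    F h ∈ seq μ :=
  P.isPathway.closedF μ hμ _ hF (fun _ => h) fun _ => hh

lemma binary_mem (P : CodedPathway cd dcd δ seq) (hμ : μ < δ) {F : (ℕ → ℕ) → (ℕ → ℕ) → ℕ → ℕ}
    (hF : ⟨2, fun v => F (v 0) (v 1)⟩ ∈ PPtOps cd dcd) {g h : ℕ → ℕ} (hg : g ∈ seq μ)
    (hh : h ∈ seq μ) : F g h ∈ seq μ :=
  P.isPathway.closedF μ hμ _ hF ![g, h] fun i => by fin_cases i <;> assumption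

lemma codedAt_tailSeq_zero (P : CodedPathway cd dcd δ seq) (hμ : μ < δ)
    (hX : CodedAt cd seq μ X) : CodedAt cd seq μ (tailSeq (X 0)) := by
  obtain ⟨h, hh, rfl⟩ := hX
  exact ⟨_, P.unary_mem hμ (by simp [PPtOps]) (F := Fs cd dcd) hh,
    P.cd_dcd _ (antitone_tailSeq _) (iInter_tailSeq fun _ => _)⟩

lemma codedAt_tailSeq_compl (P : CodedPathway cd dcd δ seq) (hμ : μ < δ)
    (hX : CodedAt cd seq μ X) : CodedAt cd seq μ (tailSeq (X 0)ᶜ) := by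
  obtain ⟨h, hh, rfl⟩ := hX
  exact ⟨_, P.unary_mem hμ (by simp [PPtOps]) (F := Fc cd dcd) hh,
    P.cd_dcd _ (antitone_tailSeq _) (iInter_tailSeq fun _ => _)⟩

lemma fgrow_mem (P : CodedPathway cd dcd δ seq) (hμ : μ < δ) (hX : CodedAt cd seq μ X) :
    fgrow X ∈ seq μ := by
  obtain ⟨h, hh, rfl⟩ := hX
  exact P.unary_mem hμ (by simp [PPtOps]) (F := Ff cd) hh

lemma codedAt_inter (P : CodedPathway cd dcd δ seq) (hμ : μ < δ) (hX : CodedAt cd seq μ X)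
    (hY : CodedAt cd seq μ Y) : CodedAt cd seq μ (fun n => X n ∩ Y n) := by
  obtain ⟨g, hg, rfl⟩ := hX
  obtain ⟨h, hh, rfl⟩ := hY
  refine ⟨_, P.binary_mem hμ (by simp [PPtOps]) (F := Fi cd dcd) hg hh, P.cd_dcd _
    (fun m n hmn => inter_subset_inter (P.antitone_cd g hmn) (P.antitone_cd h hmn)) ?_⟩
  exact subset_empty_iff.1 <| (iInter_mono fun n => inter_subset_left).trans_eq (P.iInter_cd g)

lemma codedAt_tailSeq_psInt (P : CodedPathway cd dcd δ seq) (hμ : μ < δ)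
    (hX : CodedAt cd seq μ X) {f : ℕ → ℕ} (hf : f ∈ seq μ) :
    CodedAt cd seq μ (tailSeq (psInt X f)) := by
  obtain ⟨g, hg, rfl⟩ := hX
  exact ⟨_, P.binary_mem hμ (by simp [PPtOps]) (F := Fp cd dcd) hg hf,
    P.cd_dcd _ (antitone_tailSeq _) (iInter_tailSeq fun _ => _)⟩

end CodedPathway

section Extension

variable {cd : (ℕ → ℕ) → (ℕ → Set ℕ)} {dcd : (ℕ → Set ℕ) → (ℕ → ℕ)} {δ : Ordinal}
  {seq : Ordinal → Set (ℕ → ℕ)}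

def HasCodedBaseAt (cd : (ℕ → ℕ) → (ℕ → Set ℕ)) (seq : Ordinal → Set (ℕ → ℕ)) (μ : Ordinal)
    (F : Filter ℕ) : Prop :=
  ∀ Z ∈ F, ∃ W ∈ F, CodedAt cd seq μ (tailSeq W) ∧ (W \ Z).Finite

lemma HasCodedBaseAt.mono {μ ν : Ordinal} {F : Filter ℕ} (hF : HasCodedBaseAt cd seq μ F)
    (P : CodedPathway cd dcd δ seq) (hμν : μ ≤ ν) (hν : ν < δ) : HasCodedBaseAt cd seq ν F :=
  fun Z hZ => by
    obtain ⟨W, hW, hWc, hWZ⟩ := hF Z hZ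
    exact ⟨W, hW, P.codedAt_mono hμν hν hWc, hWZ⟩

lemma hasCodedBaseAt_iInf {μ : Ordinal} {ι : Sort*} [Nonempty ι] {F : ι → Filter ℕ}
    (hdir : Directed (· ≥ ·) F) (hF : ∀ i, HasCodedBaseAt cd seq μ (F i)) :
    HasCodedBaseAt cd seq μ (⨅ i, F i) := by
  intro Z hZ
  obtain ⟨i, hi⟩ := (mem_iInf_of_directed hdir Z).1 hZ
  obtain ⟨W, hW, hWc, hWZ⟩ := hF i Z hi
  exact ⟨W, mem_iInf_of_mem i hW, hWc, hWZ⟩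

structure IsAdmissible (cd : (ℕ → ℕ) → (ℕ → Set ℕ)) (seq : Ordinal → Set (ℕ → ℕ))
    (δ : Ordinal) (F : Filter ℕ) : Prop where
  neBot : F.NeBot
  le_cofinite : F ≤ cofinite
  codedBase : ∃ μ < δ, HasCodedBaseAt cd seq μ F

structure IsExtension (cd : (ℕ → ℕ) → (ℕ → Set ℕ)) (seq : Ordinal → Set (ℕ → ℕ))
    (δ α : Ordinal) (F F' : Filter ℕ) : Prop where
  le : F' ≤ F
  admissible : IsAdmissible cd seq δ F'
  decide : ∀ X, CodedAt cd seq α X → X 0 ∈ F' ∨ (X 0)ᶜ ∈ F'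
  pseudo : ∀ X, CodedAt cd seq α X → (∀ n, X n ∈ F) → ∃ Y ∈ F', ∀ n, (Y \ X n).Finite

def codedSeqsIn (cd : (ℕ → ℕ) → (ℕ → Set ℕ)) (seq : Ordinal → Set (ℕ → ℕ)) (ρ : Ordinal)
    (V : Ultrafilter ℕ) : Set (ℕ → Set ℕ) :=
  {X | CodedAt cd seq ρ X ∧ ∀ n, X n ∈ V}

def extensionFilter (cd : (ℕ → ℕ) → (ℕ → Set ℕ)) (seq : Ordinal → Set (ℕ → ℕ)) (ρ : Ordinal)
    (V : Ultrafilter ℕ) (f : ℕ → ℕ) (F : Filter ℕ) : Filter ℕ :=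
  F ⊓ ⨅ X ∈ codedSeqsIn cd seq ρ V, 𝓟 (psInt X f)

namespace CodedPathway

variable {α ρ σ : Ordinal} {V : Ultrafilter ℕ} {f : ℕ → ℕ} {F : Filter ℕ} {X : ℕ → Set ℕ}

lemma isAdmissible_cofinite (P : CodedPathway cd dcd δ seq) :
    IsAdmissible cd seq δ cofinite := by
  obtain ⟨μ, hμ, hc⟩ := P.exists_lt_codedAt (antitone_tailSeq univ) (iInter_tailSeq fun _ => univ)
  refine ⟨cofinite_neBot, le_rfl, μ, hμ, fun Z hZ => ⟨univ, univ_mem, hc, ?_⟩⟩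
  simpa [← compl_eq_univ_sdiff] using hZ

lemma psInt_mem_extensionFilter (hX : X ∈ codedSeqsIn cd seq ρ V) :
    psInt X f ∈ extensionFilter cd seq ρ V f F :=
  mem_inf_of_right (mem_iInf_of_mem X (mem_iInf_of_mem hX (mem_principal_self _)))

lemma mem_extensionFilter_of_codedAt_tailSeq (hV : (V : Filter ℕ) ≤ cofinite) {S : Set ℕ}
    (hS : S ∈ V) (hc : CodedAt cd seq ρ (tailSeq S)) : S ∈ extensionFilter cd seq ρ V f F :=
  mem_of_superset (psInt_mem_extensionFilter ⟨hc, tailSeq_mem hV hS⟩)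
    ((psInt_subset (antitone_tailSeq S) f).trans (tailSeq_zero S).subset)

lemma infinite_psInt_of_mem (P : CodedPathway cd dcd δ seq) (hρ : ρ < δ)
    (hV : (V : Filter ℕ) ≤ cofinite) (hf : ∀ y ∈ seq ρ, ¬ evDomLE f y)
    (hX : X ∈ codedSeqsIn cd seq ρ V) : (psInt X f).Infinite :=
  infinite_psInt (fun n => infinite_of_mem_of_le_cofinite hV (hX.2 n)) (hf _ (P.fgrow_mem hρ hX.1))

-- Take `X' = X ∩ ⟨W ∖ n⟩` for a coded base set `W ⊆* Z`.
lemma exists_psInt_subset (P : CodedPathway cd dcd δ seq) (hρ : ρ < δ)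
    (hV : (V : Filter ℕ) ≤ cofinite) (hVF : (V : Filter ℕ) ≤ F) (hF : HasCodedBaseAt cd seq ρ F)
    {Z : Set ℕ} (hZ : Z ∈ F) (hX : X ∈ codedSeqsIn cd seq ρ V) :
    ∃ X' ∈ codedSeqsIn cd seq ρ V, psInt X' f ⊆ psInt X f ∧ (psInt X' f \ Z).Finite := by
  obtain ⟨W, hW, hWc, hWZ⟩ := hF Z hZ
  refine ⟨fun n => X n ∩ tailSeq W n, ⟨P.codedAt_inter hρ hX.1 hWc,
    fun n => inter_mem (hX.2 n) (tailSeq_mem hV (hVF hW) n)⟩,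
    psInt_mono (fun n => inter_subset_left) f, hWZ.subset (sdiff_subset_sdiff_left ?_)⟩
  calc psInt _ f ⊆ psInt (tailSeq W) f := psInt_mono (fun n => inter_subset_right) f
    _ ⊆ W := (psInt_subset (antitone_tailSeq W) f).trans (tailSeq_zero W).subset

lemma hasBasis_extensionFilter (P : CodedPathway cd dcd δ seq) (hρ : ρ < δ)
    (hV : (V : Filter ℕ) ≤ cofinite) (hVF : (V : Filter ℕ) ≤ F) (hF : HasCodedBaseAt cd seq ρ F) :
    (extensionFilter cd seq ρ V f F).HasBasis
      (fun i : PProd (Set ℕ) (ℕ → Set ℕ) => i.1 ∈ F ∧ i.2 ∈ codedSeqsIn cd seq ρ V)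
      (fun i => i.1 ∩ psInt i.2 f) := by
  refine F.basis_sets.inf' (hasBasis_biInf_principal ?_ ?_)
  · rintro X hX Y hY
    exact ⟨fun n => X n ∩ Y n, ⟨P.codedAt_inter hρ hX.1 hY.1, fun n => inter_mem (hX.2 n) (hY.2 n)⟩,
      psInt_mono (fun n => inter_subset_left) f, psInt_mono (fun n => inter_subset_right) f⟩
  · obtain ⟨W, hW, hWc, -⟩ := hF univ univ_mem
    exact ⟨tailSeq W, hWc, tailSeq_mem hV (hVF hW)⟩

lemma neBot_extensionFilter (P : CodedPathway cd dcd δ seq) (hρ : ρ < δ)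
    (hV : (V : Filter ℕ) ≤ cofinite) (hVF : (V : Filter ℕ) ≤ F) (hF : HasCodedBaseAt cd seq ρ F)
    (hf : ∀ y ∈ seq ρ, ¬ evDomLE f y) : (extensionFilter cd seq ρ V f F).NeBot := by
  refine (P.hasBasis_extensionFilter hρ hV hVF hF).neBot_iff.2 fun {i} ⟨hZ, hX⟩ => ?_
  obtain ⟨X', hX', hsub, hfin⟩ := P.exists_psInt_subset hρ hV hVF hF hZ hX
  obtain ⟨x, hx, hxZ⟩ := ((P.infinite_psInt_of_mem hρ hV hf hX').sdiff hfin).nonempty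
  exact ⟨x, not_not.1 fun h => hxZ ⟨hx, h⟩, hsub hx⟩

lemma hasCodedBaseAt_extensionFilter (P : CodedPathway cd dcd δ seq) (hρσ : ρ ≤ σ) (hσ : σ < δ)
    (hfσ : f ∈ seq σ) (hV : (V : Filter ℕ) ≤ cofinite) (hVF : (V : Filter ℕ) ≤ F)
    (hF : HasCodedBaseAt cd seq ρ F) :
    HasCodedBaseAt cd seq σ (extensionFilter cd seq ρ V f F) := by
  have hρ := hρσ.trans_lt hσ
  intro s hs
  obtain ⟨⟨Z, X⟩, ⟨hZ, hX⟩, hsub⟩ := (P.hasBasis_extensionFilter hρ hV hVF hF).mem_iff.1 hs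
  obtain ⟨X', hX', hX'X, hfin⟩ := P.exists_psInt_subset hρ hV hVF hF hZ hX
  refine ⟨psInt X' f, psInt_mem_extensionFilter hX',
    P.codedAt_tailSeq_psInt hσ (P.codedAt_mono hρσ hσ hX'.1) hfσ, hfin.subset ?_⟩
  rintro x ⟨hx, hxs⟩
  exact ⟨hx, fun hxZ => hxs (hsub ⟨hxZ, hX'X hx⟩)⟩

lemma isExtension_extensionFilter (P : CodedPathway cd dcd δ seq) (hαρ : α ≤ ρ) (hρσ : ρ ≤ σ)
    (hσ : σ < δ) (hfσ : f ∈ seq σ) (hf : ∀ y ∈ seq ρ, ¬ evDomLE f y)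
    (hVF : (V : Filter ℕ) ≤ F) (hF : HasCodedBaseAt cd seq ρ F) (hFcof : F ≤ cofinite) :
    IsExtension cd seq δ α F (extensionFilter cd seq ρ V f F) := by
  have hρ := hρσ.trans_lt hσ
  have hV := hVF.trans hFcof
  refine ⟨inf_le_left, ⟨P.neBot_extensionFilter hρ hV hVF hF hf, inf_le_left.trans hFcof, σ, hσ,
    P.hasCodedBaseAt_extensionFilter hρσ hσ hfσ hV hVF hF⟩, fun X hX => ?_, fun X hX hXF => ?_⟩
  · have hXρ := P.codedAt_mono hαρ hρ hX
    exact (V.mem_or_compl_mem (X 0)).imp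
      (fun h => mem_extensionFilter_of_codedAt_tailSeq hV h (P.codedAt_tailSeq_zero hρ hXρ))
      (fun h => mem_extensionFilter_of_codedAt_tailSeq hV h (P.codedAt_tailSeq_compl hρ hXρ))
  · exact ⟨psInt X f, psInt_mem_extensionFilter ⟨P.codedAt_mono hαρ hρ hX, fun n => hVF (hXF n)⟩,
      finite_psInt_diff (P.antitone_of_codedAt hX) f⟩

theorem exists_isExtension (P : CodedPathway cd dcd δ seq) (hα : α < δ)
    (hF : IsAdmissible cd seq δ F) : ∃ F', IsExtension cd seq δ α F F' := by
  obtain ⟨μ, hμ, hbase⟩ := hF.codedBase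
  have hρ : max μ α < δ := max_lt hμ hα
  obtain ⟨f, hf⟩ := P.isPathway.avoid _ hρ
  obtain ⟨ν, hν, hfν⟩ := P.isPathway.exists_lt_mem f
  have hσ : max (max μ α) ν < δ := max_lt hρ hν
  have := hF.neBot
  exact ⟨_, P.isExtension_extensionFilter (le_max_right μ α) (le_max_left _ ν) hσ
    (P.isPathway.mono _ _ (le_max_right _ _) hσ hfν) hf (Ultrafilter.of_le F)
    (hbase.mono P (le_max_left μ α) hρ) hF.le_cofinite⟩

end CodedPathway

section Tower

variable (cd : (ℕ → ℕ) → (ℕ → Set ℕ)) (seq : Ordinal → Set (ℕ → ℕ)) (δ : Ordinal)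

-- The fallback `F` is never taken along the tower, by `CodedPathway.exists_isExtension`.
open scoped Classical in
noncomputable def extend (α : Ordinal) (F : Filter ℕ) : Filter ℕ :=
  if H : ∃ F', IsExtension cd seq δ α F F' then H.choose else F

noncomputable def tower (o : Ordinal) : Filter ℕ :=
  Ordinal.limitRecOn o cofinite (fun α F => extend cd seq δ α F)
    fun o _ F => ⨅ b : Iio o, F b b.2

variable {cd seq δ}

lemma extend_le (α : Ordinal) (F : Filter ℕ) : extend cd seq δ α F ≤ F := by
  unfold extend
  split_ifs with H
  exacts [H.choose_spec.le, le_rfl]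

lemma isExtension_extend {α : Ordinal} {F : Filter ℕ}
    (H : ∃ F', IsExtension cd seq δ α F F') : IsExtension cd seq δ α F (extend cd seq δ α F) := by
  rw [extend, dif_pos H]
  exact H.choose_spec

@[simp] lemma tower_zero : tower cd seq δ 0 = cofinite :=
  Ordinal.limitRecOn_zero _ _ _

lemma tower_add_one (α : Ordinal) :
    tower cd seq δ (α + 1) = extend cd seq δ α (tower cd seq δ α) :=
  Ordinal.limitRecOn_add_one _ _ _ _

lemma tower_limit {o : Ordinal} (ho : IsSuccLimit o) :
    tower cd seq δ o = ⨅ b : Iio o, tower cd seq δ b :=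
  Ordinal.limitRecOn_limit _ _ _ _ ho

lemma tower_antitone : Antitone (tower cd seq δ) := by
  intro β α hβα
  induction α using Ordinal.limitRecOn generalizing β with
  | zero => rw [nonpos_iff_eq_zero.1 hβα]
  | add_one α ih =>
    rcases hβα.lt_or_eq with hlt | rfl
    · rw [tower_add_one]
      exact (extend_le α _).trans (ih (lt_add_one_iff.1 hlt))
    · exact le_rfl
  | limit o ho ih =>
    rcases hβα.lt_or_eq with hlt | rfl
    · rw [tower_limit ho]
      exact iInf_le_of_le ⟨β, hlt⟩ le_rfl
    · exact le_rfl

lemma directed_tower (o : Ordinal) :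
    Directed (· ≥ ·) fun b : Iio o => tower cd seq δ b :=
  fun a b => ⟨max a b, tower_antitone (le_max_left a b), tower_antitone (le_max_right a b)⟩

lemma mem_tower_limit {o : Ordinal} (ho : IsSuccLimit o) {s : Set ℕ} :
    s ∈ tower cd seq δ o ↔ ∃ α < o, s ∈ tower cd seq δ α := by
  have : Nonempty (Iio o) := ⟨⟨0, ho.bot_lt⟩⟩
  simp [tower_limit ho, mem_iInf_of_directed (directed_tower o)]

end Tower

namespace CodedPathway

variable {cd : (ℕ → ℕ) → (ℕ → Set ℕ)} {dcd : (ℕ → Set ℕ) → (ℕ → ℕ)} {κ : Cardinal}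
  {seq : Ordinal → Set (ℕ → ℕ)}

theorem isAdmissible_tower (P : CodedPathway cd dcd κ.ord seq) (hκ : κ.IsRegular) :
    ∀ α < κ.ord, IsAdmissible cd seq κ.ord (tower cd seq κ.ord α) := by
  intro α
  induction α using Ordinal.limitRecOn with
  | zero => exact fun _ => tower_zero (cd := cd) ▸ P.isAdmissible_cofinite
  | add_one α ih =>
    intro hα
    have hα' := (lt_add_one α).trans hα
    rw [tower_add_one]
    exact (isExtension_extend (P.exists_isExtension hα' (ih hα'))).admissible
  | limit o ho ih =>
    intro hoκ
    have hb : ∀ b : Iio o, IsAdmissible cd seq κ.ord (tower cd seq κ.ord b) :=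
      fun b => ih b b.2 (b.2.trans hoκ)
    choose μ hμ hbase using fun b => (hb b).codedBase
    have hsup : ⨆ b, μ b < κ.ord := hκ.iSup_lt_ord (by
      rw [Cardinal.mk_Iio_ordinal, Cardinal.lift_lift, Cardinal.lift_lt]
      exact Cardinal.lt_ord.1 hoκ) hμ
    have : Nonempty (Iio o) := ⟨⟨0, ho.bot_lt⟩⟩
    rw [tower_limit ho]
    refine ⟨iInf_neBot_of_directed' (directed_tower o) fun b => (hb b).neBot,
      (iInf_le _ ⟨0, ho.bot_lt⟩).trans (hb _).le_cofinite, _, hsup,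
      hasCodedBaseAt_iInf (directed_tower o) fun b => (hbase b).mono P ?_ hsup⟩
    exact le_ciSup ⟨κ.ord, forall_mem_range.2 fun b => (hμ b).le⟩ b

lemma neBot_tower_ord (P : CodedPathway cd dcd κ.ord seq) (hκ : κ.IsRegular) :
    (tower cd seq κ.ord κ.ord).NeBot := by
  have ho := isSuccLimit_ord hκ.aleph0_le
  have : Nonempty (Iio κ.ord) := ⟨⟨0, ho.bot_lt⟩⟩
  rw [tower_limit ho]
  exact iInf_neBot_of_directed' (directed_tower _) fun b => (P.isAdmissible_tower hκ b b.2).neBot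

variable {α : Ordinal}

lemma isExtension_tower_add_one (P : CodedPathway cd dcd κ.ord seq) (hκ : κ.IsRegular)
    (hα : α < κ.ord) :
    IsExtension cd seq κ.ord α (tower cd seq κ.ord α) (tower cd seq κ.ord (α + 1)) := by
  rw [tower_add_one]
  exact isExtension_extend (P.exists_isExtension hα (P.isAdmissible_tower hκ α hα))

lemma tower_ord_le (hκ : κ.IsRegular) (hα : α < κ.ord) :
    tower cd seq κ.ord κ.ord ≤ tower cd seq κ.ord (α + 1) :=
  tower_antitone (succ_eq_add_one α ▸ (isSuccLimit_ord hκ.aleph0_le).succ_lt hα).le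

lemma mem_or_compl_mem_tower_ord (P : CodedPathway cd dcd κ.ord seq) (hκ : κ.IsRegular)
    (S : Set ℕ) : S ∈ tower cd seq κ.ord κ.ord ∨ Sᶜ ∈ tower cd seq κ.ord κ.ord := by
  obtain ⟨γ, hγ, hc⟩ := P.exists_lt_codedAt (antitone_tailSeq S) (iInter_tailSeq fun _ => S)
  simpa using ((P.isExtension_tower_add_one hκ hγ).decide _ hc).imp
    (tower_ord_le hκ hγ ·) (tower_ord_le hκ hγ ·)

/-- A countable family of sets of the limit filter already lies in one stage of the tower,
because `κ` is regular and uncountable. -/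
lemma exists_pseudointersection_tower_ord (P : CodedPathway cd dcd κ.ord seq)
    (hκ : κ.IsRegular) (hκω : ℵ₀ < κ) {X : ℕ → Set ℕ} (hX : Antitone X) (hX' : ⋂ n, X n = ∅)
    (hXU : ∀ n, X n ∈ tower cd seq κ.ord κ.ord) :
    ∃ Y ∈ tower cd seq κ.ord κ.ord, ∀ n, (Y \ X n).Finite := by
  obtain ⟨γ, hγ, hc⟩ := P.exists_lt_codedAt hX hX'
  choose α hα hXα using fun n => (mem_tower_limit (isSuccLimit_ord hκ.aleph0_le)).1 (hXU n)
  have hA : ⨆ n, max γ (α n) < κ.ord :=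
    hκ.iSup_lt_ord (by simpa using hκω) fun n => max_lt hγ (hα n)
  have hle := Ordinal.le_iSup fun n => max γ (α n)
  obtain ⟨Y, hY, hYX⟩ := (P.isExtension_tower_add_one hκ hA).pseudo X
    (P.codedAt_mono ((le_max_left _ _).trans (hle 0)) hA hc)
    fun n => tower_antitone ((le_max_right _ _).trans (hle n)) (hXα n)
  exact ⟨Y, tower_ord_le hκ hA hY, hYX⟩

end CodedPathway

theorem exists_pPoint_of_filter {U : Filter ℕ} [U.NeBot] (hU : U ≤ cofinite)
    (hdec : ∀ S, S ∈ U ∨ Sᶜ ∈ U)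
    (hps : ∀ X : ℕ → Set ℕ, Antitone X → ⋂ n, X n = ∅ → (∀ n, X n ∈ U) →
      ∃ Y ∈ U, ∀ n, (Y \ X n).Finite) :
    ∃ u : Ultrafilter ℕ, (∀ a : ℕ, u ≠ pure a) ∧
      ∀ X : ℕ → Set ℕ, (∀ n, X n ∈ u) → ∃ Y ∈ u, ∀ n, (Y \ X n).Finite := by
  refine ⟨.ofComplNotMemIff U fun s => ⟨(hdec s).resolve_right, compl_notMem⟩,
    fun a ha => ?_, fun X hX => ?_⟩
  · have : ({a}ᶜ : Set ℕ) ∈ (pure a : Ultrafilter ℕ) :=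
      ha ▸ hU (finite_singleton a).compl_mem_cofinite
    simp at this
  · have hanti : Antitone fun n => tailSeq (⋂ m ∈ Iic n, X m) n := fun k n hkn x ⟨hx, hxn⟩ =>
      ⟨mem_iInter₂.2 fun m hm => mem_iInter₂.1 hx m (le_trans hm hkn),
        fun h => hxn (h.trans_le hkn)⟩
    obtain ⟨Y, hY, hYX⟩ := hps _ hanti (iInter_tailSeq _)
      fun n => tailSeq_mem hU ((biInter_mem (finite_Iic n)).2 fun m _ => hX m) n
    exact ⟨Y, hY, fun n => (hYX n).subset
      (sdiff_subset_sdiff_right fun x hx => mem_iInter₂.1 hx.1 n (mem_Iic.2 le_rfl))⟩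

/-- if `cd : ω^ω → 𝔓(ω)^{↓ω}` and `dcd : 𝔓(ω)^{↓ω} → ω^ω` satisfy
`cd ∘ dcd = id` on `𝔓(ω)^{↓ω}`, `κ` is regular, and there exists a
`⟨𝔡, ℱ_{P-pt}, κ⟩`-pathway (for `𝔡 = ⟨ω^ω, ω^ω, ≤*⟩`), then there exists a P-point:
a nonprincipal ultrafilter `u` on `ω` such that every countable sequence of elements of
`u` admits a pseudointersection in `u`. -/
theorem stmt8
    (cd : (ℕ → ℕ) → (ℕ → Set ℕ))
    (hcd : ∀ f, Antitone (cd f) ∧ (⋂ n, cd f n) = ∅)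
    (dcd : (ℕ → Set ℕ) → (ℕ → ℕ))
    (hid : ∀ X : ℕ → Set ℕ, Antitone X → (⋂ n, X n) = ∅ → cd (dcd X) = X)
    (κ : Cardinal) (hκ : κ.IsRegular)
    (seq : Ordinal → Set (ℕ → ℕ))
    (hpath : IsPathway evDomLE (PPtOps cd dcd) κ.ord seq) :
    ∃ u : Ultrafilter ℕ, (∀ a : ℕ, u ≠ pure a) ∧
      ∀ X : ℕ → Set ℕ, (∀ n, X n ∈ u) → ∃ Y ∈ u, ∀ n, (Y \ X n).Finite := by
  have P : CodedPathway cd dcd κ.ord seq :=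
    ⟨fun h => (hcd h).1, fun h => (hcd h).2, hid, hpath⟩
  have hκω : ℵ₀ < κ := hκ.aleph0_le.lt_of_ne fun h =>
    not_isPathway_evDomLE_omega0 _ seq (by rwa [← h, ord_aleph0] at hpath)
  have := P.neBot_tower_ord hκ
  exact exists_pPoint_of_filter ((tower_antitone zero_le).trans_eq tower_zero)
    (P.mem_or_compl_mem_tower_ord hκ)
    fun X hX hX' => P.exists_pseudointersection_tower_ord hκ hκω hX hX'
end Extension
end

section
/- If 𝔡 = 𝔠 (the least cardinality of a ≤*-dominating family in ω^ω equals the cardinality of the continuum), then there exists a P-point. -/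
/-!
Ketonen's construction. Enumerate all sequences `X : ℕ → Set ℕ` in order type `𝔠` and choose, by
transfinite recursion, sets `Yₓ` such that the filter generated by the `Yₓ` and the cofinite filter
stays proper: at stage `x`, if `Xₓ` is compatible with the filter generated by the fewer than
`𝔠 = 𝔡` earlier sets, `Yₓ` is a pseudo-intersection of `Xₓ` compatible with it. It exists because
that filter has a base `{b}` of size `< 𝔡`: if `f_b n` is a point of `b ∩ X₀ ∩ ⋯ ∩ Xₙ` above `n`,
some `g` is dominated by no `f_b`, and `⋃ₙ (X₀ ∩ ⋯ ∩ Xₙ) ∩ [0, g n]` meets every `b` in an infinite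
set. The resulting filter is an ultrafilter because, for every `s`, the constant sequence at `s` or
the one at `sᶜ` is compatible with it.
-/

open Cardinal Set

/-- The dominating number `𝔡`: the least cardinality of a `≤*`-dominating family. -/
noncomputable def dNumber : Cardinal :=
  sInf {c | ∃ D : Set (ℕ → ℕ), #D = c ∧ ∀ f : ℕ → ℕ, ∃ g ∈ D, evDomLE f g}

open Filter

namespace Filter

variable {α : Type*}

theorem inf_cofinite_neBot_iff {f : Filter α} :
    (f ⊓ cofinite).NeBot ↔ ∀ s ∈ f, s.Infinite := by
  simp only [inf_neBot_iff_frequently_left, frequently_cofinite_iff_infinite]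
  exact ⟨fun h s hs => h hs, fun h _ hp => h _ hp⟩

theorem inf_principal_inf_cofinite_neBot_iff {f : Filter α} {Y : Set α} :
    (f ⊓ 𝓟 Y ⊓ cofinite).NeBot ↔ ∀ s ∈ f, (s ∩ Y).Infinite := by
  rw [inf_cofinite_neBot_iff]
  refine ⟨fun h s hs => h _ (inter_mem_inf hs (mem_principal_self Y)), fun h s hs => ?_⟩
  rw [mem_inf_principal] at hs
  exact (h _ hs).mono fun x hx => hx.1 hx.2

theorem generate_insert (Y : Set α) (G : Set (Set α)) :
    generate (insert Y G) = generate G ⊓ 𝓟 Y := by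
  rw [insert_eq, generate_union, generate_singleton, inf_comm]

theorem generate_anti {G H : Set (Set α)} (h : G ⊆ H) : generate H ≤ generate G :=
  le_generate_iff.2 fun _ hs => mem_generate_of_mem (h hs)

theorem neBot_generate_iUnion_inf {ι : Type*} {l : Filter α} [l.NeBot] {S : ι → Set (Set α)}
    (hS : Directed (· ⊆ ·) S) (h : ∀ i, (generate (S i) ⊓ l).NeBot) :
    (generate (⋃ i, S i) ⊓ l).NeBot := by
  cases isEmpty_or_nonempty ι
  · simpa [generate_empty]
  rw [generate_iUnion, iInf_inf]
  exact iInf_neBot_of_directed' (Directed.mono_comp (· ⊆ ·) (rb := (· ≥ ·))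
    (g := fun T => generate T ⊓ l) (fun _ _ hST => inf_le_inf_right l (generate_anti hST)) hS) h

theorem neBot_generate_image_inf_of_isLowerSet {ι : Type*} [LinearOrder ι] {l : Filter α}
    [l.NeBot] (f : ι → Set α) {s : Set ι} (hs : IsLowerSet s)
    (h : ∀ y ∈ s, (generate (f '' Iic y) ⊓ l).NeBot) : (generate (f '' s) ⊓ l).NeBot := by
  have hs_eq : f '' s = ⋃ y : s, f '' Iic y := by
    rw [← image_iUnion]
    congr 1
    ext x
    simp only [mem_iUnion, mem_Iic, Subtype.exists, exists_prop]
    exact ⟨fun hx => ⟨x, hx, le_rfl⟩, fun ⟨y, hy, hxy⟩ => hs hxy hy⟩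
  rw [hs_eq]
  exact neBot_generate_iUnion_inf
    (Monotone.directed_le fun _ _ hyz => image_mono (Iic_subset_Iic.2 hyz)) fun y => h y y.2

theorem exists_pPoint_of_forall_neBot {u : Filter α} [u.NeBot] (hu : u ≤ cofinite)
    (h : ∀ X : ℕ → Set α, (u ⊓ generate (range X)).NeBot → ∃ Y ∈ u, ∀ n, (Y \ X n).Finite) :
    ∃ U : Ultrafilter α, (∀ a, U ≠ pure a) ∧
      ∀ X : ℕ → Set α, (∀ n, X n ∈ U) → ∃ Y ∈ U, ∀ n, (Y \ X n).Finite := by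
  have hmem : ∀ s, (u ⊓ 𝓟 s).NeBot → s ∈ u := by
    intro s hs
    obtain ⟨Y, hY, hYs⟩ := h (fun _ => s) (by simpa [range_const] using hs)
    refine mem_of_superset (inter_mem hY (hu (hYs 0).compl_mem_cofinite)) ?_
    exact fun x ⟨hxY, hx⟩ => by_contra fun hxs => hx ⟨hxY, hxs⟩
  have hultra : ∀ s, sᶜ ∉ u ↔ s ∈ u := fun s =>
    ⟨fun hs => hmem s ⟨mt inf_principal_eq_bot.1 hs⟩, fun hs hsc => by
      simpa using inter_mem hs hsc⟩
  refine ⟨.ofComplNotMemIff u hultra, fun a ha => ?_, fun X hX => h X ?_⟩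
  · have ha' : {a}ᶜ ∈ Ultrafilter.ofComplNotMemIff u hultra :=
      hu (finite_singleton a).compl_mem_cofinite
    rw [ha, Ultrafilter.mem_pure] at ha'
    exact ha' rfl
  · have hXu : range X ⊆ u.sets := range_subset_iff.2 hX
    rwa [inf_eq_left.2 (le_generate_iff.2 hXu)]

end Filter

theorem exists_frequently_lt_of_mk_lt_dNumber {D : Set (ℕ → ℕ)} (hD : #D < dNumber) :
    ∃ g : ℕ → ℕ, ∀ f ∈ D, ∃ᶠ n in atTop, f n < g n := by
  by_contra! h
  have hdom : ∀ g, ∃ f ∈ D, evDomLE g f := fun g => by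
    obtain ⟨f, hf, hgf⟩ := h g
    exact ⟨f, hf, by simpa [evDomLE] using hgf⟩
  exact hD.not_ge (csInf_le' ⟨D, rfl, hdom⟩)

theorem exists_pseudoIntersection_of_mk_lt_dNumber {F : Filter ℕ} {ι : Type} {p : ι → Prop}
    {b : ι → Set ℕ} (hF : F.HasBasis p b) (hcard : #(Subtype p) < dNumber) {X : ℕ → Set ℕ}
    (hX : (F ⊓ generate (range X) ⊓ cofinite).NeBot) :
    ∃ Y, (∀ n, (Y \ X n).Finite) ∧ ∀ s ∈ F, (s ∩ Y).Infinite := by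
  have hpoint : ∀ i : Subtype p, ∀ n, ∃ m, m ∈ b i ∩ ⋂ k ≤ n, X k ∧ n < m := by
    intro i n
    have hmem : b i ∩ ⋂ k ≤ n, X k ∈ F ⊓ generate (range X) :=
      inter_mem_inf (hF.mem_of_mem i.2)
        ((biInter_mem (finite_Iic n)).2 fun k _ => mem_generate_of_mem (mem_range_self k))
    exact (inf_cofinite_neBot_iff.1 hX _ hmem).exists_gt n
  choose φ hφ hφn using hpoint
  obtain ⟨g, hg⟩ := exists_frequently_lt_of_mk_lt_dNumber (mk_range_le.trans_lt hcard)
  refine ⟨⋃ n, (⋂ k ≤ n, X k) ∩ Iic (g n), fun k => ?_, fun s hs => ?_⟩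
  · refine ((finite_Iio k).biUnion fun n _ => finite_Iic (g n)).subset ?_
    rintro m ⟨hm, hmk⟩
    obtain ⟨n, hmX, hmg⟩ := mem_iUnion.1 hm
    have hnk : n < k := lt_of_not_ge fun hkn => hmk (mem_iInter₂.1 hmX k hkn)
    exact mem_biUnion hnk hmg
  · obtain ⟨i, hi, hbs⟩ := hF.mem_iff.1 hs
    refine infinite_of_forall_exists_gt fun a => ?_
    obtain ⟨n, han, hlt⟩ := frequently_atTop.1 (hg _ (mem_range_self ⟨i, hi⟩)) a
    obtain ⟨hb, hmX⟩ := hφ ⟨i, hi⟩ n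
    exact ⟨φ ⟨i, hi⟩ n, ⟨hbs hb, mem_iUnion.2 ⟨n, hmX, hlt.le⟩⟩, han.trans_lt (hφn _ n)⟩

theorem mk_finite_subsets_lt_continuum {β : Type*} {G : Set β} (hG : #G < 𝔠) :
    #{t : Set β // t.Finite ∧ t ⊆ G} < 𝔠 := by
  have hsurj : Function.Surjective fun u : Finset G =>
      (⟨(↑) '' (u : Set G), u.finite_toSet.image _, Subtype.coe_image_subset G _⟩ :
        {t : Set β // t.Finite ∧ t ⊆ G}) := by
    rintro ⟨t, ht, htG⟩
    refine ⟨(ht.preimage Subtype.val_injective.injOn).toFinset, ?_⟩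
    simp [Subtype.image_preimage_coe, inter_eq_right.2 htG]
  refine (mk_le_of_surjective hsurj).trans_lt ?_
  rcases finite_or_infinite G with hfin | hinf
  · exact (lt_aleph0_of_finite _).trans_le aleph0_le_continuum
  · rwa [mk_finset_of_infinite]

section Construction

variable {α : Type*}

open scoped Classical in
noncomputable def extendStep (G : Set (Set α)) (X : ℕ → Set α) : Set α :=
  if h : ∃ Y, (∀ n, (Y \ X n).Finite) ∧ (generate G ⊓ 𝓟 Y ⊓ cofinite).NeBot then h.choose
  else univ

theorem neBot_generate_insert_extendStep {G : Set (Set α)} (hG : (generate G ⊓ cofinite).NeBot)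
    (X : ℕ → Set α) : (generate (insert (extendStep G X) G) ⊓ cofinite).NeBot := by
  rw [generate_insert, extendStep]
  split_ifs with h
  · exact h.choose_spec.2
  · simpa using hG

theorem extendStep_sdiff_finite {G : Set (Set α)} {X : ℕ → Set α}
    (h : ∃ Y, (∀ n, (Y \ X n).Finite) ∧ (generate G ⊓ 𝓟 Y ⊓ cofinite).NeBot) (n : ℕ) :
    (extendStep G X \ X n).Finite := by
  rw [extendStep, dif_pos h]
  exact h.choose_spec.1 n

variable {ι : Type*} [LinearOrder ι] [WellFoundedLT ι] (task : ι → ℕ → Set α)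

noncomputable def extendSeq : ι → Set α :=
  wellFounded_lt.fix fun x prior => extendStep (range fun y : Iio x => prior y y.2) (task x)

theorem extendSeq_eq (x : ι) :
    extendSeq task x = extendStep (extendSeq task '' Iio x) (task x) := by
  rw [extendSeq, WellFounded.fix_eq, image_eq_range]

variable [Infinite α]

theorem neBot_generate_extendSeq_image_Iic (x : ι) :
    (generate (extendSeq task '' Iic x) ⊓ cofinite).NeBot := by
  induction x using WellFoundedLT.induction with
  | ind x ih =>
    rw [← Iio_insert, image_insert_eq, extendSeq_eq]
    exact neBot_generate_insert_extendStep
      (neBot_generate_image_inf_of_isLowerSet _ (isLowerSet_Iio x) ih) _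

theorem neBot_generate_range_extendSeq : (generate (range (extendSeq task)) ⊓ cofinite).NeBot := by
  rw [← image_univ]
  exact neBot_generate_image_inf_of_isLowerSet _ isLowerSet_univ fun y _ =>
    neBot_generate_extendSeq_image_Iic task y

end Construction

theorem extendSeq_sdiff_finite (hd : dNumber = 𝔠)
    (task : (𝔠 : Cardinal.{0}).ord.ToType → ℕ → Set ℕ) (x : (𝔠 : Cardinal.{0}).ord.ToType)
    (hx : (generate (range (extendSeq task)) ⊓ cofinite ⊓ generate (range (task x))).NeBot)
    (n : ℕ) : (extendSeq task x \ task x n).Finite := by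
  rw [extendSeq_eq]
  refine extendStep_sdiff_finite ?_ n
  have hcard : #(extendSeq task '' Iio x) < 𝔠 :=
    (mk_image_le (f := extendSeq task)).trans_lt (by simpa using mk_Iio_lt x)
  rw [inf_right_comm] at hx
  obtain ⟨Y, hYX, hY⟩ := exists_pseudoIntersection_of_mk_lt_dNumber (hasBasis_generate _)
    (by rw [hd]; exact mk_finite_subsets_lt_continuum hcard)
    (hx.mono (inf_le_inf_right _ (inf_le_inf_right _ (generate_anti (image_subset_range _ _)))))
  exact ⟨Y, hYX, inf_principal_inf_cofinite_neBot_iff.2 hY⟩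

/-- if `𝔡 = 𝔠`, then there exists a P-point: a nonprincipal ultrafilter `u`
on `ω` such that for every sequence `⟨Xₙ⟩` of elements of `u` there is `Y ∈ u` with
`Y ∖ Xₙ` finite for every `n`. -/
theorem stmt14 (h : dNumber = Cardinal.continuum) :
    ∃ u : Ultrafilter ℕ, (∀ a : ℕ, u ≠ pure a) ∧
      ∀ X : ℕ → Set ℕ, (∀ n, X n ∈ u) → ∃ Y ∈ u, ∀ n, (Y \ X n).Finite := by
  obtain ⟨task⟩ : Nonempty ((𝔠 : Cardinal.{0}).ord.ToType ≃ (ℕ → Set ℕ)) :=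
    Cardinal.eq.1 (by simp [mk_set])
  have := neBot_generate_range_extendSeq task
  refine exists_pPoint_of_forall_neBot (u := generate (range (extendSeq task)) ⊓ cofinite)
    inf_le_right fun X hX => ?_
  obtain ⟨x, rfl⟩ := task.surjective X
  exact ⟨extendSeq task x, mem_inf_of_left (mem_generate_of_mem (mem_range_self x)),
    extendSeq_sdiff_finite h task x hX⟩
end

section
/- Let 𝔵 = ⟨A,B,E⟩ and 𝔶 = ⟨C,D,E'⟩ be triples with E ⊆ A × B and E' ⊆ C × D, let φ = ⟨φ₁, φ₂⟩ be a morphism from 𝔵 to 𝔶 (i.e. φ₁ : C → A, φ₂ : B → D, and for all c ∈ C and b ∈ B, φ₁(c) E b implies c E' φ₂(b)), fix d₀ ∈ D, and let ℱ be a family of finitary operations on B each compatible with φ₂. For each n-ary F ∈ ℱ define φ(F) : Dⁿ → D by φ(F)(d₁,…,dₙ) = φ₂(F(b₁,…,bₙ)) if dᵢ = φ₂(bᵢ) for all i, and φ(F)(d₁,…,dₙ) = d₀ if some dᵢ ∉ ran(φ₂); compatibility makes φ(F) well defined. If for a cardinal κ there exists a ⟨𝔶, {φ(F) : F ∈ ℱ},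 κ⟩-pathway, then there exists a ⟨𝔵, ℱ, κ⟩-pathway. -/
open Cardinal Set

/-- A finitary operation `F` on `B` is compatible with `φ₂ : B → D` if `φ₂`-equality of
the arguments implies `φ₂`-equality of the values. -/
def Compatible {B D : Type*} (φ₂ : B → D) (F : Σ n : ℕ, (Fin n → B) → B) : Prop :=
  ∀ x y : Fin F.1 → B, (∀ i, φ₂ (x i) = φ₂ (y i)) → φ₂ (F.2 x) = φ₂ (F.2 y)

open Classical in
/-- The operation `φ(F)` on `D` induced by `F` on `B` via `φ₂`, using the fixed default
value `d₀` when some argument is not in the range of `φ₂`. -/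
noncomputable def pushOp {B D : Type*} (φ₂ : B → D) (d₀ : D)
    (F : Σ n : ℕ, (Fin n → B) → B) : Σ n : ℕ, (Fin n → D) → D :=
  ⟨F.1, fun v =>
    if h : ∀ i, v i ∈ Set.range φ₂ then
      φ₂ (F.2 (fun i => (Set.mem_range.mp (h i)).choose))
    else d₀⟩

/-! The preimages `φ₂ ⁻¹' seq α` form the required pathway: preimages commute with unions,
a witness `c` that `seq α` is not `E'`-dominating yields the witness `φ₁ c` for its
preimage, and compatibility makes `φ(F)` agree with `F` through `φ₂`. -/

section PullbackPathway

variable {A B C D : Type*}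

theorem Compatible.pushOp_apply_comp {φ₂ : B → D} {F : Σ n : ℕ, (Fin n → B) → B}
    (hF : Compatible φ₂ F) (d₀ : D) (v : Fin F.1 → B) :
    (pushOp φ₂ d₀ F).2 (φ₂ ∘ v) = φ₂ (F.2 v) := by
  have hrange : ∀ i, (φ₂ ∘ v) i ∈ range φ₂ := fun i => mem_range_self (v i)
  simp only [pushOp, dif_pos hrange]
  exact hF _ _ fun i => (mem_range.mp (hrange i)).choose_spec

theorem ClosedUnderOp.preimage_of_pushOp {φ₂ : B → D} {d₀ : D} {S : Set D}
    {F : Σ n : ℕ, (Fin n → B) → B} (hF : Compatible φ₂ F)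
    (hS : ClosedUnderOp S (pushOp φ₂ d₀ F)) : ClosedUnderOp (φ₂ ⁻¹' S) F := by
  intro v hv
  rw [mem_preimage, ← hF.pushOp_apply_comp d₀ v]
  exact hS (φ₂ ∘ v) hv

theorem IsPathway.preimage {E : A → B → Prop} {E' : C → D → Prop} {φ₁ : C → A} {φ₂ : B → D}
    (hmor : ∀ c b, E (φ₁ c) b → E' c (φ₂ b)) {d₀ : D} {𝓕 : Set (Σ n : ℕ, (Fin n → B) → B)}
    (hcomp : ∀ F ∈ 𝓕, Compatible φ₂ F) {δ : Ordinal} {seq : Ordinal → Set D}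
    (hpath : IsPathway E' (pushOp φ₂ d₀ '' 𝓕) δ seq) :
    IsPathway E 𝓕 δ fun α => φ₂ ⁻¹' seq α where
  mono α β hαβ hβ := preimage_mono (hpath.mono α β hαβ hβ)
  cont γ hγ hlim := by simp only [hpath.cont γ hγ hlim, preimage_iUnion]
  total := by simp only [← preimage_iUnion, hpath.total, preimage_univ]
  avoid α hα := by
    obtain ⟨c, hc⟩ := hpath.avoid α hα
    exact ⟨φ₁ c, fun b hb hE => hc (φ₂ b) hb (hmor c b hE)⟩
  closedF α hα F hF :=
    .preimage_of_pushOp (hcomp F hF) (hpath.closedF α hα _ (mem_image_of_mem _ hF))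

end PullbackPathway

/-- if `φ = ⟨φ₁, φ₂⟩` is a morphism from `𝔵 = ⟨A,B,E⟩` to `𝔶 = ⟨C,D,E'⟩`
and `𝓕` is a family of finitary operations on `B` compatible with `φ₂`, then the
existence of a `⟨𝔶, φ(𝓕), κ⟩`-pathway implies the existence of an `⟨𝔵, 𝓕, κ⟩`-pathway. -/
theorem stmt16 {A B C D : Type u} (E : A → B → Prop) (E' : C → D → Prop)
    (φ₁ : C → A) (φ₂ : B → D)
    (hmor : ∀ (c : C) (b : B), E (φ₁ c) b → E' c (φ₂ b))
    (d₀ : D) (𝓕 : Set (Σ n : ℕ, (Fin n → B) → B))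
    (hcomp : ∀ F ∈ 𝓕, Compatible φ₂ F)
    (κ : Cardinal.{u}) (seq : Ordinal → Set D)
    (hpath : IsPathway E' (pushOp φ₂ d₀ '' 𝓕) κ.ord seq) :
    ∃ seq' : Ordinal → Set B, IsPathway E 𝓕 κ.ord seq' :=
  ⟨_, hpath.preimage hmor hcomp⟩
end
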